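/- Let ρ = Σ_{x∈X} P(x)|x⟩⟨x|⊗ω(x) be a CQ state, Π = Σ_{x∈S}|x⟩⟨x| a projector onto a subset S ⊆ X, p = Tr(ΠρΠ) > 0, and τ = p⁻¹ΠρΠ the normalized projected state. Then the conditional min-entropy satisfies H_min(X|E)_τ ≥ H_min(X|E)_ρ + log₂ p. -/

import Mathlib

open Matrix Kronecker
open scoped BigOperators ComplexOrder

/-- A density operator: positive semidefinite with unit trace. -/
def IsDensity {n : Type*} [Fintype n] [DecidableEq n] (ρ : Matrix n n ℂ) : Prop :=
  ρ.PosSemidef ∧ ρ.trace = 1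

/-- A quantum channel (CPTP map) from system E to system X: trace preserving,
and completely positive (characterized by positive semidefiniteness of the Choi matrix). -/
def IsCPTP {E X : Type*} [Fintype E] [DecidableEq E] [Fintype X] [DecidableEq X]
    (Φ : Matrix E E ℂ →ₗ[ℂ] Matrix X X ℂ) : Prop :=
  (∀ M : Matrix E E ℂ, (Φ M).trace = M.trace) ∧
  (Matrix.of (fun p q : E × X =>
    (Φ (Matrix.single p.1 q.1 (1 : ℂ))) p.2 q.2)).PosSemidef

/-- Guessing probability of a CQ state ρ = Σ_x P(x)|x⟩⟨x|⊗ω(x):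
p_guess = sup over channels E of Σ_x P(x)⟨x|E[ω(x)]|x⟩. -/
noncomputable def pGuess {X E : Type*} [Fintype X] [DecidableEq X] [Fintype E] [DecidableEq E]
    (P : X → ℝ) (ω : X → Matrix E E ℂ) : ℝ :=
  ⨆ Φ : {Φ : Matrix E E ℂ →ₗ[ℂ] Matrix X X ℂ // IsCPTP Φ},
    ∑ x, P x * ((Φ.1 (ω x)) x x).re

/-- Conditional min-entropy of a CQ state, via 2^{-Hmin} = p_guess. -/
noncomputable def Hmin {X E : Type*} [Fintype X] [DecidableEq X] [Fintype E] [DecidableEq E]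
    (P : X → ℝ) (ω : X → Matrix E E ℂ) : ℝ :=
  - Real.logb 2 (pGuess P ω)

/-! For every channel `Φ`, the success probability of guessing `X` from `τ` is
`∑_{x ∈ S} P x / p · ⟨x|Φ(ω x)|x⟩ ≤ p⁻¹ ∑_x P x ⟨x|Φ(ω x)|x⟩`, because complete positivity
(`Φ(v v*) = Vᴴ C V` for the Choi matrix `C`) makes every `Φ(ω x)` a density matrix, with
nonnegative diagonal. Hence `p_guess(τ) ≤ p_guess(ρ) / p`, and `-log₂` turns this into the claim;
`p_guess(τ) > 0`, needed for the logarithm to be monotone, is witnessed by always guessing some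
`x₀ ∈ S` with `P x₀ > 0`. -/

section Channels

variable {E X : Type*} [DecidableEq E]

def choiMatrix (Φ : Matrix E E ℂ →ₗ[ℂ] Matrix X X ℂ) : Matrix (E × X) (E × X) ℂ :=
  Matrix.of fun p q => Φ (Matrix.single p.1 q.1 1) p.2 q.2

variable [Fintype E]

lemma apply_eq_sum_choiMatrix (Φ : Matrix E E ℂ →ₗ[ℂ] Matrix X X ℂ) (M : Matrix E E ℂ)
    (a b : X) : Φ M a b = ∑ i, ∑ j, M i j * choiMatrix Φ (i, a) (j, b) := by
  conv_lhs => rw [M.matrix_eq_sum_single]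
  simp only [map_sum, Matrix.sum_apply, choiMatrix, Matrix.of_apply]
  refine Finset.sum_congr rfl fun i _ => Finset.sum_congr rfl fun j _ => ?_
  rw [← smul_eq_mul, ← Matrix.smul_apply, ← map_smul, Matrix.smul_single, smul_eq_mul, mul_one]

variable [Fintype X] [DecidableEq X]

lemma map_vecMulVec_self_star (Φ : Matrix E E ℂ →ₗ[ℂ] Matrix X X ℂ) (v : E → ℂ) :
    Φ (vecMulVec v (star v)) =
      (Matrix.of fun (q : E × X) (b : X) => if q.2 = b then star (v q.1) else 0)ᴴ *
        choiMatrix Φ * Matrix.of fun (q : E × X) (b : X) => if q.2 = b then star (v q.1) else 0 := by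
  ext a b
  simp only [apply_eq_sum_choiMatrix, vecMulVec_apply, Pi.star_apply, RCLike.star_def,
    Matrix.mul_apply, conjTranspose_apply, of_apply, apply_ite (starRingEnd ℂ),
    RingHomCompTriple.comp_apply, RingHom.id_apply, map_zero, ite_mul, zero_mul,
    Fintype.sum_prod_type, Finset.sum_ite_eq', Finset.mem_univ, ↓reduceIte, mul_ite,
    Finset.sum_mul, mul_zero]
  rw [Finset.sum_comm]
  exact Finset.sum_congr rfl fun _ _ => Finset.sum_congr rfl fun _ _ => mul_right_comm _ _ _

lemma posSemidef_map_of_posSemidef_choiMatrix {Φ : Matrix E E ℂ →ₗ[ℂ] Matrix X X ℂ}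
    (hΦ : (choiMatrix Φ).PosSemidef) {M : Matrix E E ℂ} (hM : M.PosSemidef) :
    (Φ M).PosSemidef := by
  obtain ⟨m, v, rfl⟩ := Matrix.posSemidef_iff_eq_sum_vecMulVec.mp hM
  rw [map_sum]
  refine Matrix.posSemidef_sum _ fun k _ => ?_
  rw [map_vecMulVec_self_star]
  exact hΦ.conjTranspose_mul_mul_same _

lemma IsCPTP.isDensity_map {Φ : Matrix E E ℂ →ₗ[ℂ] Matrix X X ℂ} (hΦ : IsCPTP Φ)
    {M : Matrix E E ℂ} (hM : IsDensity M) : IsDensity (Φ M) :=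
  ⟨posSemidef_map_of_posSemidef_choiMatrix hΦ.2 hM.1, (hΦ.1 M).trans hM.2⟩

lemma IsDensity.re_diag_nonneg {M : Matrix X X ℂ} (hM : IsDensity M) (x : X) : 0 ≤ (M x x).re :=
  (Complex.le_def.mp hM.1.diag_nonneg).1

lemma IsDensity.re_diag_le_one {M : Matrix X X ℂ} (hM : IsDensity M) (x : X) : (M x x).re ≤ 1 :=
  calc (M x x).re ≤ ∑ y, (M y y).re :=
        Finset.single_le_sum (fun y _ => hM.re_diag_nonneg y) (Finset.mem_univ x)
    _ = M.trace.re := (Complex.re_sum _ _).symm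
    _ = 1 := by rw [hM.2, Complex.one_re]

end Channels

section PrepareChannel

variable {E X : Type*} [Fintype E] [DecidableEq X]

variable (E) in
noncomputable def prepareChannel (x₀ : X) : Matrix E E ℂ →ₗ[ℂ] Matrix X X ℂ :=
  (Matrix.traceLinearMap E ℂ ℂ).smulRight (Matrix.single x₀ x₀ 1)

lemma prepareChannel_apply (x₀ : X) (M : Matrix E E ℂ) :
    prepareChannel E x₀ M = M.trace • Matrix.single x₀ x₀ 1 := rfl

variable [DecidableEq E]

lemma choiMatrix_prepareChannel (x₀ : X) :
    choiMatrix (prepareChannel E x₀) = Matrix.diagonal fun q => if q.2 = x₀ then 1 else 0 := by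
  ext ⟨i, a⟩ ⟨j, b⟩
  by_cases hij : i = j
  · subst hij
    simp only [choiMatrix, of_apply, prepareChannel_apply, trace_single_eq_same, one_smul,
      single_apply, diagonal_apply, Prod.mk.injEq, true_and]
    grind
  · simp [choiMatrix, prepareChannel_apply, hij]

variable [Fintype X]

lemma isCPTP_prepareChannel (x₀ : X) : IsCPTP (prepareChannel E x₀) := by
  refine ⟨fun M => by simp [prepareChannel_apply], ?_⟩
  show (choiMatrix _).PosSemidef
  rw [choiMatrix_prepareChannel]
  exact Matrix.PosSemidef.diagonal fun q => by positivity

end PrepareChannel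

section GuessingProbability

variable {X E : Type*} [Fintype X] [DecidableEq X] [Fintype E] [DecidableEq E]

lemma bddAbove_guessingSums (P : X → ℝ) {ω : X → Matrix E E ℂ} (hω : ∀ x, IsDensity (ω x)) :
    BddAbove (Set.range fun Φ : {Φ : Matrix E E ℂ →ₗ[ℂ] Matrix X X ℂ // IsCPTP Φ} =>
      ∑ x, P x * ((Φ.1 (ω x)) x x).re) := by
  refine ⟨∑ x, |P x|, ?_⟩
  rintro _ ⟨Φ, rfl⟩
  refine Finset.sum_le_sum fun x _ => ?_
  have hρ := Φ.2.isDensity_map (hω x)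
  calc P x * (Φ.1 (ω x) x x).re ≤ |P x| * (Φ.1 (ω x) x x).re :=
        mul_le_mul_of_nonneg_right (le_abs_self _) (hρ.re_diag_nonneg x)
    _ ≤ |P x| := mul_le_of_le_one_right (abs_nonneg _) (hρ.re_diag_le_one x)

lemma sum_le_pGuess (P : X → ℝ) {ω : X → Matrix E E ℂ} (hω : ∀ x, IsDensity (ω x))
    {Φ : Matrix E E ℂ →ₗ[ℂ] Matrix X X ℂ} (hΦ : IsCPTP Φ) :
    ∑ x, P x * (Φ (ω x) x x).re ≤ pGuess P ω :=
  le_ciSup (bddAbove_guessingSums P hω) ⟨Φ, hΦ⟩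

/-- Always guessing `x₀` succeeds with probability `P x₀`. -/
lemma le_pGuess (P : X → ℝ) {ω : X → Matrix E E ℂ} (hω : ∀ x, IsDensity (ω x)) (x₀ : X) :
    P x₀ ≤ pGuess P ω := by
  refine le_of_eq_of_le ?_ (sum_le_pGuess P hω (isCPTP_prepareChannel (E := E) x₀))
  simp [prepareChannel_apply, (hω _).2, Matrix.single_apply, apply_ite Complex.re]

lemma pGuess_nonneg {P : X → ℝ} (hP : ∀ x, 0 ≤ P x) {ω : X → Matrix E E ℂ}
    (hω : ∀ x, IsDensity (ω x)) : 0 ≤ pGuess P ω :=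
  Real.iSup_nonneg fun Φ => Finset.sum_nonneg fun x _ =>
    mul_nonneg (hP x) ((Φ.2.isDensity_map (hω x)).re_diag_nonneg x)

lemma pGuess_le_mul_pGuess {P Q : X → ℝ} {c : ℝ} (hP : ∀ x, 0 ≤ P x) (hc : 0 ≤ c)
    (hQP : ∀ x, Q x ≤ c * P x) {ω : X → Matrix E E ℂ} (hω : ∀ x, IsDensity (ω x)) :
    pGuess Q ω ≤ c * pGuess P ω := by
  refine Real.iSup_le (fun Φ => ?_) (mul_nonneg hc (pGuess_nonneg hP hω))
  calc ∑ x, Q x * (Φ.1 (ω x) x x).re ≤ ∑ x, c * P x * (Φ.1 (ω x) x x).re :=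
        Finset.sum_le_sum fun x _ =>
          mul_le_mul_of_nonneg_right (hQP x) ((Φ.2.isDensity_map (hω x)).re_diag_nonneg x)
    _ = c * ∑ x, P x * (Φ.1 (ω x) x x).re := by simp only [Finset.mul_sum, mul_assoc]
    _ ≤ c * pGuess P ω := mul_le_mul_of_nonneg_left (sum_le_pGuess P hω Φ.2) hc

end GuessingProbability

/-- The normalized projected state `τ = p⁻¹ΠρΠ` is the CQ state with distribution `P'` and the
same conditional states `ω`. -/
theorem hmin_projection_general {X E : Type*} [Fintype X] [DecidableEq X] [Fintype E] [DecidableEq E]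
    (P : X → ℝ) (hP : ∀ x, 0 ≤ P x)
    (ω : X → Matrix E E ℂ) (hω : ∀ x, IsDensity (ω x))
    (S : Finset X) (p : ℝ) (hp : p = ∑ x ∈ S, P x) (hppos : 0 < p)
    (P' : X → ℝ) (hP' : ∀ x, P' x = if x ∈ S then P x / p else 0) :
    Hmin P' ω ≥ Hmin P ω + Real.logb 2 p := by
  obtain ⟨x₀, hx₀S, hx₀⟩ : ∃ x ∈ S, 0 < P x :=
    Finset.exists_lt_of_sum_lt (f := 0) (by simpa [← hp] using hppos)
  have hpinv : 0 ≤ p⁻¹ := inv_nonneg.mpr hppos.le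
  have hle : pGuess P' ω ≤ p⁻¹ * pGuess P ω := by
    refine pGuess_le_mul_pGuess hP hpinv (fun x => ?_) hω
    rw [hP' x]
    split_ifs
    · rw [div_eq_inv_mul]
    · exact mul_nonneg hpinv (hP x)
  have hpos : 0 < pGuess P' ω :=
    (by simpa [hP', hx₀S] using div_pos hx₀ hppos : 0 < P' x₀).trans_le (le_pGuess P' hω x₀)
  have hposP : 0 < pGuess P ω := pos_of_mul_pos_right (hpos.trans_le hle) hpinv
  have hlog := Real.logb_le_logb_of_le one_lt_two hpos hle
  rw [Real.logb_mul (inv_ne_zero hppos.ne') hposP.ne', Real.logb_inv] at hlog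
  unfold Hmin
  linarith

/-- Projecting a CQ state ρ = Σ_x P(x)|x⟩⟨x|⊗ω(x) onto Π = Σ_{x∈S}|x⟩⟨x| and
renormalizing by p = Tr(ΠρΠ) = Σ_{x∈S} P(x) > 0 yields τ with distribution
P'(x) = 1_{x∈S} P(x)/p.  Then H_min(X|E)_τ ≥ H_min(X|E)_ρ + log₂ p. -/
theorem hmin_projection {X E : Type*} [Fintype X] [DecidableEq X] [Fintype E] [DecidableEq E]
    (P : X → ℝ) (hP : ∀ x, 0 ≤ P x) (hP1 : ∑ x, P x = 1)
    (ω : X → Matrix E E ℂ) (hω : ∀ x, IsDensity (ω x))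
    (S : Finset X) (p : ℝ) (hp : p = ∑ x ∈ S, P x) (hppos : 0 < p)
    (P' : X → ℝ) (hP' : ∀ x, P' x = if x ∈ S then P x / p else 0) :
    Hmin P' ω ≥ Hmin P ω + Real.logb 2 p :=
  hmin_projection_general P hP ω hω S p hp hppos P' hP'
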